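/- arXiv:1803.02098 — 6 statements merged into one kernel-verified Lean document; each statement's English description precedes it below -/
import Mathlib

section
/- Let G be a countable discrete group acting effectively and minimally by homeomorphisms on a Cantor space X. If the action is quasi-analytic (i.e., whenever two group elements agree as homeomorphisms on a non-empty open subset of X, they agree on all of X), then the isotropy set Iso(Φ) = { x ∈ X : ∃ g ≠ e, g·x = x } is meager in X. -/
/-- For an effective minimal action of a countable group `G` by
homeomorphisms on a Cantor space `X`, if the action is quasi-analytic then the
isotropy set is meager. -/
theorem quasiAnalytic_implies_topologicallyFree
    {G X : Type*} [Group G] [Countable G]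
    [TopologicalSpace X] [CompactSpace X] [TopologicalSpace.MetrizableSpace X]
    [TotallyDisconnectedSpace X] [PerfectSpace X] [Nonempty X]
    [MulAction G X] [ContinuousConstSMul G X]
    (heff : ∀ g₁ g₂ : G, (∀ x : X, g₁ • x = g₂ • x) → g₁ = g₂)
    (hmin : ∀ x : X, Dense (MulAction.orbit G x))
    (hqa : ∀ V : Set X, V.Nonempty → IsOpen V →
      ∀ g₁ g₂ : G, (∀ x ∈ V, g₁ • x = g₂ • x) → ∀ x : X, g₁ • x = g₂ • x) :
    IsMeagre {x : X | ∃ g : G, g ≠ 1 ∧ g • x = x} := by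
  letI := TopologicalSpace.metrizableSpaceMetric X
  rw [isMeagre_iff_countable_union_isNowhereDense]
  refine ⟨(fun g : G => {x : X | g • x = x}) '' {g | g ≠ 1}, ?_, ?_, ?_⟩
  · rintro t ⟨g, hg, rfl⟩
    have hclosed : IsClosed {x : X | g • x = x} :=
      isClosed_eq (continuous_const_smul g) continuous_id
    rw [hclosed.isNowhereDense_iff]
    by_contra h
    rw [← Set.not_nonempty_iff_eq_empty, not_not] at h
    have := hqa (interior {x : X | g • x = x}) h isOpen_interior g 1
      (fun x hx => by simpa using interior_subset hx)
    exact hg (heff g 1 (by simpa using this))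
  · exact (Set.countable_univ.mono (Set.subset_univ _)).image _
  · rintro x ⟨g, hg, hx⟩
    exact ⟨{x : X | g • x = x}, ⟨g, hg, rfl⟩, hx⟩
end

section
/- Let G be a finitely generated group acting minimally and equicontinuously by homeomorphisms on a compact metric Cantor space X. Then for every clopen subset U ⊆ X, the orbit { g·U : g ∈ G } of U under the induced action on clopen sets is finite. -/
/-!
A clopen set `U` of a compact uniform space is saturated for some entourage `S` (points that are
`S`-close are both in `U` or both outside it). Equicontinuity yields one entourage `V` such that
`V`-close points stay `S`-close under every group element, so every translate `g • U` is
`V`-saturated. In a totally bounded space a `V`-saturated set is determined by its trace on a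
finite `V`-net, hence there are only finitely many of them.
-/

open Pointwise Set Uniformity

theorem IsClopen.setOf_mem_iff_mem_mem_uniformity {X : Type*} [UniformSpace X] [CompactSpace X]
    {U : Set X} (hU : IsClopen U) : {p : X × X | p.1 ∈ U ↔ p.2 ∈ U} ∈ 𝓤 X := by
  have hsplit : {p : X × X | p.1 ∈ U ↔ p.2 ∈ U} = U ×ˢ U ∪ Uᶜ ×ˢ Uᶜ := by
    ext ⟨x, y⟩
    by_cases hx : x ∈ U <;> by_cases hy : y ∈ U <;> simp [hx, hy]
  have hopen : IsOpen {p : X × X | p.1 ∈ U ↔ p.2 ∈ U} := by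
    rw [hsplit]
    exact (hU.isOpen.prod hU.isOpen).union (hU.compl.isOpen.prod hU.compl.isOpen)
  rw [← nhdsSet_diagonal_eq_uniformity]
  exact hopen.mem_nhdsSet.2 fun p (hp : p.1 = p.2) => by simp [hp]

theorem TotallyBounded.finite_setOf_saturated {X : Type*} [UniformSpace X]
    (hX : TotallyBounded (univ : Set X)) {V : Set (X × X)} (hV : V ∈ 𝓤 X) :
    {A : Set X | ∀ p ∈ V, p.1 ∈ A ↔ p.2 ∈ A}.Finite := by
  obtain ⟨t, htfin, hcover⟩ := hX V hV
  refine htfin.finite_subsets.of_injOn (f := fun A => A ∩ t)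
    (fun A _ => inter_subset_right) fun A hA B hB hAB => ?_
  ext x
  obtain ⟨y, hyt, hxy⟩ := mem_iUnion₂.1 (hcover (mem_univ x))
  have htrace : y ∈ A ↔ y ∈ B := by
    simpa [hyt] using congrArg (y ∈ ·) hAB
  rw [hA _ hxy, hB _ hxy]
  exact htrace

theorem UniformEquicontinuous.finite_range_preimage_of_isClopen {ι Y X : Type*}
    [UniformSpace Y] [UniformSpace X] [CompactSpace X] {F : ι → Y → X}
    (hF : UniformEquicontinuous F) (hY : TotallyBounded (univ : Set Y))
    {U : Set X} (hU : IsClopen U) : (range fun i => F i ⁻¹' U).Finite := by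
  refine (hY.finite_setOf_saturated (hF _ hU.setOf_mem_iff_mem_mem_uniformity)).subset ?_
  rintro _ ⟨i, rfl⟩ p hp
  exact hp i

theorem equicontinuous_clopen_orbit_finite_general
    {G X : Type*} [Group G]
    [MetricSpace X] [CompactSpace X]
    [MulAction G X]
    (hequi : ∀ ε > (0 : ℝ), ∃ δ > (0 : ℝ), ∀ x y : X, dist x y < δ →
      ∀ g : G, dist (g • x) (g • y) < ε) :
    ∀ U : Set X, IsClopen U → {V : Set X | ∃ g : G, V = g • U}.Finite := by
  intro U hU
  have hF : UniformEquicontinuous fun (g : G) (x : X) => g⁻¹ • x :=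
    Metric.uniformEquicontinuous_iff.2 fun ε hε =>
      (hequi ε hε).imp fun _ ⟨hδ, h⟩ => ⟨hδ, fun x y hxy g => h x y hxy g⁻¹⟩
  refine (hF.finite_range_preimage_of_isClopen isCompact_univ.totallyBounded hU).subset ?_
  rintro _ ⟨g, rfl⟩
  exact ⟨g, preimage_smul_inv g U⟩

/-- For a minimal equicontinuous action of a finitely generated
group `G` on a compact metric Cantor space `X`, the orbit of every clopen set
under the induced action on clopen sets is finite. -/
theorem equicontinuous_clopen_orbit_finite
    {G X : Type*} [Group G] [Group.FG G]
    [MetricSpace X] [CompactSpace X]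
    [TotallyDisconnectedSpace X] [PerfectSpace X] [Nonempty X]
    [MulAction G X] [ContinuousConstSMul G X]
    (hmin : ∀ x : X, Dense (MulAction.orbit G x))
    (hequi : ∀ ε > (0 : ℝ), ∃ δ > (0 : ℝ), ∀ x y : X, dist x y < δ →
      ∀ g : G, dist (g • x) (g • y) < ε) :
    ∀ U : Set X, IsClopen U → {V : Set X | ∃ g : G, V = g • U}.Finite :=
  equicontinuous_clopen_orbit_finite_general hequi
end

section
/- Let G act on a Cantor space X by homeomorphisms. If the action is locally quasi-analytic, then its germinal groupoid is Hausdorff: for every x ∈ X and g, g' ∈ G with g·x = g'·x, if there is a sequence x_i → x such that the germs of g and g' at x_i agree for all i, then the germs of g and g' at x agree. -/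
/-- If an action of `G` on a Cantor space `X` is locally
quasi-analytic, then its germinal groupoid is Hausdorff: whenever `g • x = g' • x`
and there is a sequence `x_i → x` at which the germs of `g` and `g'` agree,
the germs of `g` and `g'` agree at `x`. -/
theorem lqa_implies_germinal_hausdorff
    {G X : Type*} [Group G]
    [MetricSpace X] [CompactSpace X]
    [TotallyDisconnectedSpace X] [PerfectSpace X] [Nonempty X]
    [MulAction G X] [ContinuousConstSMul G X]
    (hlqa : ∃ ε > (0 : ℝ), ∀ U : Set X, U.Nonempty → IsOpen U → Metric.diam U < ε →
      ∀ V ⊆ U, V.Nonempty → IsOpen V →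
        ∀ g₁ g₂ : G, (∀ x ∈ V, g₁ • x = g₂ • x) → ∀ x ∈ U, g₁ • x = g₂ • x) :
    ∀ (x : X) (g g' : G), g • x = g' • x →
      ∀ u : ℕ → X, Filter.Tendsto u Filter.atTop (nhds x) →
        (∀ i : ℕ, ∃ O : Set X, IsOpen O ∧ u i ∈ O ∧ ∀ z ∈ O, g • z = g' • z) →
        ∃ O : Set X, IsOpen O ∧ x ∈ O ∧ ∀ z ∈ O, g • z = g' • z := by
  obtain ⟨ε, hε, hlqa⟩ := hlqa
  intro x g g' hx u hu hgerm
  set U := Metric.ball x (ε / 3) with hU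
  have hxU : x ∈ U := Metric.mem_ball_self (by linarith)
  -- some uᵢ lies in U
  have : ∀ᶠ i in Filter.atTop, u i ∈ U :=
    hu (Metric.isOpen_ball.mem_nhds hxU)
  obtain ⟨i, hiU⟩ := this.exists
  obtain ⟨O, hOopen, hOmem, hOagree⟩ := hgerm i
  refine ⟨U, Metric.isOpen_ball, hxU, ?_⟩
  have hdiam : Metric.diam U < ε := by
    calc Metric.diam U ≤ 2 * (ε / 3) := Metric.diam_ball (by linarith)
      _ < ε := by linarith
  exact hlqa U ⟨x, hxU⟩ Metric.isOpen_ball hdiam (O ∩ U)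
    Set.inter_subset_right ⟨u i, hOmem, hiU⟩ (hOopen.inter Metric.isOpen_ball)
    g g' (fun z hz => hOagree z hz.1)
end

section
/- Let G be a Noetherian group (every subgroup is finitely generated). Then every minimal equicontinuous action of G on a Cantor space X is locally quasi-analytic: there exists ε > 0 such that for all nonempty open U with diam(U) < ε and nonempty open V ⊆ U, if two group elements agree as homeomorphisms on V then they agree on U. -/
/-- (Theorem 1.3 / Theorem `thm-LQA`) A minimal equicontinuous
action of a Noetherian group (every subgroup finitely generated) on a Cantor
space is locally quasi-analytic. -/
theorem noetherian_implies_lqa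
    {G X : Type*} [Group G]
    [MetricSpace X] [CompactSpace X]
    [TotallyDisconnectedSpace X] [PerfectSpace X] [Nonempty X]
    [MulAction G X] [ContinuousConstSMul G X]
    (hnoeth : ∀ H : Subgroup G, H.FG)
    (hmin : ∀ x : X, Dense (MulAction.orbit G x))
    (hequi : ∀ ε > (0 : ℝ), ∃ δ > (0 : ℝ), ∀ x y : X, dist x y < δ →
      ∀ g : G, dist (g • x) (g • y) < ε) :
    ∃ ε > (0 : ℝ), ∀ U : Set X, U.Nonempty → IsOpen U → Metric.diam U < ε →
      ∀ V ⊆ U, V.Nonempty → IsOpen V →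
        ∀ g₁ g₂ : G, (∀ x ∈ V, g₁ • x = g₂ • x) → ∀ x ∈ U, g₁ • x = g₂ • x := by
  classical
  obtain ⟨x₀⟩ := ‹Nonempty X›
  -- The subgroup of elements fixing some ball around x₀ pointwise
  set K : Subgroup G :=
    { carrier := {g : G | ∃ r > (0:ℝ), ∀ y : X, dist x₀ y < r → g • y = y}
      one_mem' := ⟨1, one_pos, fun y _ => one_smul G y⟩
      mul_mem' := by
        rintro a b ⟨r, hr, ha⟩ ⟨r', hr', hb⟩
        refine ⟨min r r', lt_min hr hr', fun y hy => ?_⟩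
        rw [mul_smul, hb y (hy.trans_le (min_le_right _ _)),
          ha y (hy.trans_le (min_le_left _ _))]
      inv_mem' := by
        rintro a ⟨r, hr, ha⟩
        exact ⟨r, hr, fun y hy => by
          conv_lhs => rw [← ha y hy, inv_smul_smul]⟩ } with hKdef
  obtain ⟨S, hS⟩ := hnoeth K
  -- a common radius working for all elements of a finite subset of K
  have key : ∀ (T : Finset G), ((T : Set G) ⊆ (K : Set G)) →
      ∃ r > (0:ℝ), ∀ g ∈ T, ∀ y : X, dist x₀ y < r → g • y = y := by
    intro T
    induction T using Finset.induction_on with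
    | empty => exact fun _ => ⟨1, one_pos, by simp⟩
    | @insert a T hna ih =>
      intro hsub
      obtain ⟨r', hr', hrest⟩ :=
        ih (fun g hg => hsub (Finset.mem_coe.2 (Finset.mem_insert_of_mem hg)))
      obtain ⟨r, hr, ha⟩ := hsub (Finset.mem_coe.2 (Finset.mem_insert_self _ _))
      refine ⟨min r r', lt_min hr hr', fun g hg y hy => ?_⟩
      rcases Finset.mem_insert.1 hg with rfl | hg
      · exact ha y (hy.trans_le (min_le_left _ _))
      · exact hrest g hg y (hy.trans_le (min_le_right _ _))
  obtain ⟨r₀, hr₀, hgen⟩ := key S (by rw [← hS]; exact Subgroup.subset_closure)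
  -- the subgroup fixing the ball of radius r₀ pointwise
  set H₀ : Subgroup G :=
    { carrier := {g : G | ∀ y : X, dist x₀ y < r₀ → g • y = y}
      one_mem' := fun y _ => one_smul G y
      mul_mem' := by
        intro a b ha hb y hy
        rw [mul_smul, hb y hy, ha y hy]
      inv_mem' := by
        intro a ha y hy
        conv_lhs => rw [← ha y hy, inv_smul_smul] } with hH₀def
  -- (★): any element fixing some ball around x₀ fixes the ball of radius r₀
  have hstar : ∀ g ∈ K, ∀ y : X, dist x₀ y < r₀ → g • y = y := by
    intro g hg
    have hle : K ≤ H₀ := by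
      rw [← hS]
      exact (Subgroup.closure_le H₀).2 (fun a ha => hgen a ha)
    exact hle hg
  -- equicontinuity at scale r₀
  obtain ⟨ε', hε', heq⟩ := hequi r₀ hr₀
  refine ⟨ε' / 2, by positivity,
    fun U hUne hUopen hUdiam V hVU hVne hVopen g₁ g₂ hagree x hxU => ?_⟩
  obtain ⟨v, hv⟩ := hVne
  obtain ⟨s, hs, hball⟩ := Metric.isOpen_iff.1 hVopen v hv
  set s' := min s ε' with hs'def
  have hs'pos : (0:ℝ) < s' := lt_min hs hε'
  obtain ⟨δ, hδ, hδeq⟩ := hequi (s' / 2) (by positivity)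
  -- find a group element moving x₀ close to v
  obtain ⟨w, hworbit, hw⟩ := (hmin x₀).exists_mem_open Metric.isOpen_ball
    ⟨v, Metric.mem_ball_self (by positivity : (0:ℝ) < s' / 2)⟩
  obtain ⟨h, rfl⟩ := hworbit
  have hw' : dist (h • x₀) v < s' / 2 := Metric.mem_ball.1 hw
  set g := g₁⁻¹ * g₂ with hgdef
  have hgfix : ∀ y ∈ V, g • y = y := by
    intro y hy
    rw [hgdef, mul_smul, ← hagree y hy, inv_smul_smul]
  -- the conjugate h⁻¹ g h fixes a ball around x₀ pointwise
  have hkK : h⁻¹ * g * h ∈ K := by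
    refine ⟨δ, hδ, fun y hy => ?_⟩
    have h1 : dist (h • x₀) (h • y) < s' / 2 := hδeq x₀ y hy h
    have h2 : dist (h • y) v < s' := by
      calc dist (h • y) v ≤ dist (h • y) (h • x₀) + dist (h • x₀) v :=
            dist_triangle _ _ _
        _ < s' / 2 + s' / 2 := add_lt_add (by rwa [dist_comm] at h1) hw'
        _ = s' := by ring
    have hyV : h • y ∈ V :=
      hball (Metric.mem_ball.2 (h2.trans_le (min_le_left _ _)))
    show (h⁻¹ * g * h) • y = y
    rw [mul_smul, mul_smul, hgfix _ hyV, inv_smul_smul]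
  have hfix : ∀ z : X, dist x₀ z < r₀ → (h⁻¹ * g * h) • z = z := hstar _ hkK
  -- x is close to h • x₀
  have hbdd : Bornology.IsBounded U :=
    (isCompact_univ.isBounded).subset (Set.subset_univ U)
  have hdx : dist (h • x₀) x < ε' := by
    calc dist (h • x₀) x ≤ dist (h • x₀) v + dist v x := dist_triangle _ _ _
      _ < s' / 2 + ε' / 2 := add_lt_add hw'
          (lt_of_le_of_lt (Metric.dist_le_diam_of_mem hbdd (hVU hv) hxU) hUdiam)
      _ ≤ ε' / 2 + ε' / 2 := by
          have : s' ≤ ε' := min_le_right _ _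
          linarith
      _ = ε' := by ring
  have hfin : dist x₀ (h⁻¹ • x) < r₀ := by
    have := heq (h • x₀) x hdx h⁻¹
    rwa [inv_smul_smul] at this
  have hconj := hfix (h⁻¹ • x) hfin
  rw [mul_smul, mul_smul, smul_inv_smul] at hconj
  -- conclude
  have hgx : g • x = x := smul_left_cancel h⁻¹ hconj
  rw [hgdef, mul_smul] at hgx
  have := congrArg (fun z => g₁ • z) hgx
  simpa using this.symm
end

section
/- Let G act minimally and equicontinuously on a Cantor space X, and suppose the action is not locally quasi-analytic. Then for any x ∈ X, the isotropy subgroup G_x = { g ∈ G : g·x = x } contains an infinite strictly increasing chain of subgroups; in particular G is not Noetherian. -/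
open Pointwise

section step
variable {G X : Type*} [Group G] [MetricSpace X] [CompactSpace X]
  [MulAction G X] [ContinuousConstSMul G X]

lemma step_lemma
    (hmin : ∀ x : X, Dense (MulAction.orbit G x))
    (hequi : ∀ ε > (0 : ℝ), ∃ δ > (0 : ℝ), ∀ x y : X, dist x y < δ →
      ∀ g : G, dist (g • x) (g • y) < ε)
    (hnotlqa : ¬ ∃ ε > (0 : ℝ), ∀ U : Set X, U.Nonempty → IsOpen U →
      Metric.diam U < ε → ∀ V ⊆ U, V.Nonempty → IsOpen V →
        ∀ g₁ g₂ : G, (∀ x ∈ V, g₁ • x = g₂ • x) → ∀ x ∈ U, g₁ • x = g₂ • x)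
    (x : X) (W : Set X) (hW : IsOpen W) (hxW : x ∈ W) :
    ∃ (k : G) (V : Set X) (y : X), IsOpen V ∧ x ∈ V ∧ V ⊆ W ∧
      (∀ z ∈ V, k • z = z) ∧ y ∈ W ∧ k • y ≠ y := by
  obtain ⟨r, hr, hball⟩ := Metric.isOpen_iff.mp hW x hxW
  obtain ⟨δ₁, hδ₁, h1⟩ := hequi r hr
  obtain ⟨δ₂, hδ₂, h2⟩ := hequi (δ₁/3) (by positivity)
  push_neg at hnotlqa
  obtain ⟨U, hUne, hUo, hUd, V₀, hV₀U, hV₀ne, hV₀o, g₁, g₂, hagree, y₀, hy₀U, hy₀ne⟩ :=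
    hnotlqa δ₂ hδ₂
  set k₀ : G := g₂⁻¹ * g₁ with hk₀
  have hk₀fix : ∀ v ∈ V₀, k₀ • v = v := by
    intro v hv
    have := hagree v hv
    rw [hk₀, mul_smul, this, inv_smul_smul]
  have hk₀mv : k₀ • y₀ ≠ y₀ := by
    intro h
    apply hy₀ne
    have : g₂ • (k₀ • y₀) = g₂ • y₀ := by rw [h]
    rwa [hk₀, mul_smul, smul_inv_smul] at this
  obtain ⟨v₀, hv₀⟩ := hV₀ne
  have hdv₀y₀ : dist v₀ y₀ < δ₂ :=
    lt_of_le_of_lt (Metric.dist_le_diam_of_mem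
      (Metric.isBounded_of_compactSpace) (hV₀U hv₀) hy₀U) hUd
  obtain ⟨a, ha_orb, ha_ball⟩ := (hmin v₀).exists_mem_open Metric.isOpen_ball
    ⟨x, Metric.mem_ball_self (by positivity : (0:ℝ) < δ₁/3)⟩
  obtain ⟨h, rfl⟩ := ha_orb
  have hA_open : IsOpen (h • V₀) := hV₀o.smul h
  have hy₁ : dist (h • v₀) (h • y₀) < δ₁/3 := h2 v₀ y₀ hdv₀y₀ h
  have hBo : IsOpen ((h • V₀) ∩ Metric.ball (h • v₀) (δ₁/3)) :=
    hA_open.inter Metric.isOpen_ball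
  have hBne : ((h • V₀) ∩ Metric.ball (h • v₀) (δ₁/3)).Nonempty :=
    ⟨h • v₀, Set.smul_mem_smul_set hv₀, Metric.mem_ball_self (by positivity)⟩
  obtain ⟨b, hb_orb, hbA, hb_ball⟩ := (hmin x).exists_mem_open hBo hBne
  obtain ⟨h', rfl⟩ := hb_orb
  refine ⟨h'⁻¹ * (h * k₀ * h⁻¹) * h', (h'⁻¹ • (h • V₀)) ∩ W, h'⁻¹ • (h • y₀),
    ((hA_open.smul h'⁻¹).inter hW), ⟨?_, hxW⟩, Set.inter_subset_right, ?_, ?_, ?_⟩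
  · exact ⟨h' • x, hbA, inv_smul_smul h' x⟩
  · intro z hz
    obtain ⟨w, hw, hwz⟩ := hz.1
    obtain ⟨v, hv, rfl⟩ := hw
    subst hwz
    simp only [mul_smul, smul_inv_smul, inv_smul_smul]
    rw [hk₀fix v hv]
  · apply hball
    have hd : dist (h' • x) (h • y₀) < δ₁ := by
      have := dist_triangle (h' • x) (h • v₀) (h • y₀)
      have hb' : dist (h' • x) (h • v₀) < δ₁/3 := Metric.mem_ball.mp hb_ball
      linarith
    have := h1 (h' • x) (h • y₀) hd h'⁻¹
    rw [inv_smul_smul] at this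
    rw [Metric.mem_ball, dist_comm]
    exact this
  · intro hcon
    apply hk₀mv
    have h3 : (h'⁻¹ * (h * k₀ * h⁻¹) * h') • (h'⁻¹ • (h • y₀)) =
        h'⁻¹ • ((h * k₀ * h⁻¹) • (h • y₀)) := by
      simp [mul_smul, smul_inv_smul]
    rw [h3] at hcon
    have hcon2 : (h * k₀ * h⁻¹) • (h • y₀) = h • y₀ := smul_left_cancel h'⁻¹ hcon
    have : h • (k₀ • y₀) = h • y₀ := by
      simpa [mul_smul, inv_smul_smul] using hcon2
    exact smul_left_cancel h this

end step

/-- If a minimal equicontinuous action of `G` on a Cantor space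
`X` is not locally quasi-analytic, then for every `x ∈ X` the isotropy group
`G_x` contains an infinite strictly increasing chain of subgroups; in
particular `G` is not Noetherian. -/
theorem not_lqa_isotropy_chain
    {G X : Type*} [Group G]
    [MetricSpace X] [CompactSpace X]
    [TotallyDisconnectedSpace X] [PerfectSpace X] [Nonempty X]
    [MulAction G X] [ContinuousConstSMul G X]
    (hmin : ∀ x : X, Dense (MulAction.orbit G x))
    (hequi : ∀ ε > (0 : ℝ), ∃ δ > (0 : ℝ), ∀ x y : X, dist x y < δ →
      ∀ g : G, dist (g • x) (g • y) < ε)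
    (hnotlqa : ¬ ∃ ε > (0 : ℝ), ∀ U : Set X, U.Nonempty → IsOpen U →
      Metric.diam U < ε → ∀ V ⊆ U, V.Nonempty → IsOpen V →
        ∀ g₁ g₂ : G, (∀ x ∈ V, g₁ • x = g₂ • x) → ∀ x ∈ U, g₁ • x = g₂ • x) :
    ∀ x : X, (∃ H : ℕ → Subgroup G, StrictMono H ∧
        ∀ n : ℕ, H n ≤ MulAction.stabilizer G x) ∧
      ¬ ∀ H : Subgroup G, H.FG := by
  intro x
  -- iterate the step lemma
  have key : ∀ p : {p : Set X × G × X // IsOpen p.1 ∧ x ∈ p.1 ∧ ∀ z ∈ p.1, p.2.1 • z = z},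
      ∃ q : {p : Set X × G × X // IsOpen p.1 ∧ x ∈ p.1 ∧ ∀ z ∈ p.1, p.2.1 • z = z},
        q.1.1 ⊆ p.1.1 ∧ q.1.2.2 ∈ p.1.1 ∧ q.1.2.1 • q.1.2.2 ≠ q.1.2.2 := by
    intro p
    obtain ⟨k, V, y, hVo, hxV, hVW, hfix, hyW, hky⟩ :=
      step_lemma hmin hequi hnotlqa x p.1.1 p.2.1 p.2.2.1
    exact ⟨⟨(V, k, y), hVo, hxV, hfix⟩, hVW, hyW, hky⟩
  choose g hg1 hg2 hg3 using key
  set base : {p : Set X × G × X // IsOpen p.1 ∧ x ∈ p.1 ∧ ∀ z ∈ p.1, p.2.1 • z = z} :=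
    ⟨(Set.univ, 1, x), isOpen_univ, trivial, fun z _ => one_smul _ _⟩ with hbase
  set f : ℕ → {p : Set X × G × X // IsOpen p.1 ∧ x ∈ p.1 ∧ ∀ z ∈ p.1, p.2.1 • z = z} :=
    fun n => g^[n+1] base with hf
  have hf_succ : ∀ n, f (n+1) = g (f n) := by
    intro n
    simp only [hf]
    exact Function.iterate_succ_apply' g (n+1) base
  set V : ℕ → Set X := fun n => (f n).1.1 with hV
  set k : ℕ → G := fun n => (f n).1.2.1 with hk
  set y : ℕ → X := fun n => (f n).1.2.2 with hy
  have hxV : ∀ n, x ∈ V n := fun n => (f n).2.2.1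
  have hfix : ∀ n, ∀ z ∈ V n, k n • z = z := fun n => (f n).2.2.2
  have hsub : ∀ n, V (n+1) ⊆ V n := by
    intro n
    simp only [hV]
    rw [hf_succ n]; exact hg1 (f n)
  have hyVn : ∀ n, y (n+1) ∈ V n := by
    intro n
    simp only [hy, hV]
    rw [hf_succ n]; exact hg2 (f n)
  have hmv : ∀ n, k n • y n ≠ y n := by
    intro n
    have h0 : f n = g (g^[n] base) := Function.iterate_succ_apply' g n base
    simp only [hk, hy]
    rw [h0]
    exact hg3 _
  have hanti : ∀ i j, i ≤ j → V j ⊆ V i := by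
    intro i j hij
    induction j with
    | zero => simp_all
    | succ m ih =>
      rcases Nat.lt_or_ge i (m+1) with h | h
      · exact fun z hz => ih (Nat.lt_succ_iff.mp h) (hsub m hz)
      · have : i = m + 1 := le_antisymm hij h
        subst this; exact fun z hz => hz
  have hyV : ∀ i n, i < n → y n ∈ V i := by
    intro i n hin
    obtain ⟨m, rfl⟩ : ∃ m, n = m + 1 := ⟨n - 1, by omega⟩
    exact hanti i m (by omega) (hyVn m)
  set H : ℕ → Subgroup G := fun n => Subgroup.closure {w | ∃ i < n, w = k i} with hH
  have hgen_stab : ∀ (z : X) (n : ℕ), (∀ i < n, k i • z = z) →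
      H n ≤ MulAction.stabilizer G z := by
    intro z n hz
    rw [hH]
    apply (Subgroup.closure_le _).mpr
    rintro w ⟨i, hi, rfl⟩
    exact hz i hi
  have hmono : Monotone H := by
    intro a b hab
    apply Subgroup.closure_mono
    rintro w ⟨i, hi, rfl⟩
    exact ⟨i, lt_of_lt_of_le hi hab, rfl⟩
  have hknotin : ∀ n, k n ∉ H n := by
    intro n hkn
    have hst : H n ≤ MulAction.stabilizer G (y n) :=
      hgen_stab (y n) n (fun i hi => hfix i (y n) (hyV i n hi))
    exact hmv n (hst hkn)
  have hkin : ∀ n, k n ∈ H (n+1) :=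
    fun n => Subgroup.subset_closure ⟨n, Nat.lt_succ_self n, rfl⟩
  have hstrict : StrictMono H := by
    apply strictMono_nat_of_lt_succ
    intro n
    refine lt_of_le_of_ne (hmono (Nat.le_succ n)) (fun h => ?_)
    exact hknotin n (h ▸ hkin n)
  constructor
  · exact ⟨H, hstrict, fun n => hgen_stab x n (fun i _ => hfix i x (hxV i))⟩
  · intro hFG
    obtain ⟨S, hSc, hSfin⟩ := (Subgroup.fg_iff _).mp (hFG (⨆ n, H n))
    have hdir : Directed (· ≤ ·) H := hstrict.monotone.directed_le
    have hmem : ∀ s ∈ S, ∃ n, s ∈ H n := by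
      intro s hs
      have : s ∈ (⨆ n, H n) := hSc ▸ Subgroup.subset_closure hs
      exact (Subgroup.mem_iSup_of_directed hdir).mp this
    choose! nf hnf using hmem
    have hN : ∀ s ∈ S, s ∈ H (hSfin.toFinset.sup nf) := by
      intro s hs
      exact hmono (Finset.le_sup (hSfin.mem_toFinset.mpr hs)) (hnf s hs)
    have hKle : (⨆ n, H n) ≤ H (hSfin.toFinset.sup nf) := by
      rw [← hSc]
      exact (Subgroup.closure_le _).mpr hN
    have : H (hSfin.toFinset.sup nf + 1) ≤ H (hSfin.toFinset.sup nf) :=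
      le_trans (le_iSup H _) hKle
    exact absurd this (not_le_of_gt (hstrict (Nat.lt_succ_self _)))
end

section
/- Let G and H be countable groups acting on the same Cantor space X via actions Φ and Ψ, and suppose the identity map is a continuous orbit equivalence; assume the action Ψ restricted to an adapted clopen set V is topologically free, so that there is a dense Ψ-invariant subset Z ⊆ V on which the action of the restricted holonomy group H_V^Ψ ⊆ Homeo(V) is free. Then for any g, g' ∈ G_U with U ⊆ V adapted for Φ, the orbit map α̂: G_U × U → H_V^Ψ determined by ĝ := α̂(g,x) being the unique element of H_V^Ψ with ĝ(x) = Φ(g)(x) for x ∈ Z, satisfies the cocycle identity α̂(g'g, x) = α̂(g', Φ(g)(x)) · α̂(g, x) for all x ∈ U. -/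
open Pointwise

/-- Lemma `lem-cocycle`: Suppose the countable groups `G` and
`H` act on the same Cantor space `X` via `Φ` and `Ψ`, and the identity map is a
continuous orbit equivalence, witnessed by locally constant orbit maps
`A : G × X → H` and `B : H × X → G`.  Let `V` be an adapted clopen set for `Ψ`
and `Z ⊆ V` a dense invariant subset on which the restricted holonomy group
`H_V^Ψ` acts freely.  Then for any adapted set `U ⊆ V` for `Φ`, the induced map
`α̂ : G_U × U → H_V^Ψ` is a cocycle over the action of `Φ_U` on `U`:
`α̂(g'g, x) = α̂(g', Φ(g)(x)) · α̂(g, x)` as homeomorphisms of `V`. -/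
theorem cocycle_over_restricted_action
    {G H X : Type*} [Group G] [Countable G] [Group H] [Countable H]
    [MetricSpace X] [CompactSpace X]
    [TotallyDisconnectedSpace X] [PerfectSpace X] [Nonempty X]
    [MulAction G X] [ContinuousConstSMul G X]
    [MulAction H X] [ContinuousConstSMul H X]
    (A : G → X → H) (B : H → X → G)
    (hA : ∀ (g : G) (x : X), A g x • x = g • x)
    (hB : ∀ (h : H) (x : X), B h x • x = h • x)
    (hAcont : ∀ (g : G) (x : X), ∃ O : Set X, IsOpen O ∧ x ∈ O ∧
      ∀ y ∈ O, A g y = A g x)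
    (hBcont : ∀ (h : H) (x : X), ∃ O : Set X, IsOpen O ∧ x ∈ O ∧
      ∀ y ∈ O, B h y = B h x)
    (U V : Set X) (hUne : U.Nonempty) (hUclopen : IsClopen U)
    (hVclopen : IsClopen V) (hUV : U ⊆ V)
    (hUadapted : ∀ g : G, ((g • U) ∩ U).Nonempty → g • U = U)
    (hVadapted : ∀ h : H, ((h • V) ∩ V).Nonempty → h • V = V)
    (Z : Set X) (hZV : Z ⊆ V)
    (hZdense : ∀ O : Set X, IsOpen O → (O ∩ V).Nonempty → (O ∩ Z).Nonempty)
    (hZinv : ∀ h : H, h • V = V → ∀ z ∈ Z, h • z ∈ Z)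
    (hZfree : ∀ h h' : H, h • V = V → h' • V = V →
      ∀ z ∈ Z, h • z = h' • z → ∀ y ∈ V, h • y = h' • y) :
    ∀ g g' : G, g • U = U → g' • U = U → ∀ x ∈ U, ∀ y ∈ V,
      A (g' * g) x • y = A g' (g • x) • (A g x • y) := by
  intro g g' hgU hg'U x hxU y hyV
  -- membership facts
  have hxV : x ∈ V := hUV hxU
  have hgxU : g • x ∈ U := by
    rw [← hgU]; exact Set.smul_mem_smul_set hxU
  have hgxV : g • x ∈ V := hUV hgxU
  have hg'gxU : (g' * g) • x ∈ U := by
    rw [mul_smul, ← hg'U]; exact Set.smul_mem_smul_set hgxU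
  -- the three holonomy elements stabilize V
  have stab : ∀ (h : H) (w : X), w ∈ V → h • w ∈ V → h • V = V := by
    intro h w hw hhw
    exact hVadapted h ⟨h • w, Set.smul_mem_smul_set hw, hhw⟩
  have hV1 : A (g' * g) x • V = V := by
    refine stab _ x hxV ?_
    rw [hA]; exact hUV hg'gxU
  have hV2 : A g x • V = V := by
    refine stab _ x hxV ?_
    rw [hA]; exact hgxV
  have hV3 : A g' (g • x) • V = V := by
    refine stab _ (g • x) hgxV ?_
    rw [hA, ← mul_smul]; exact hUV hg'gxU
  have hV4 : (A g' (g • x) * A g x) • V = V := by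
    rw [mul_smul, hV2, hV3]
  -- local constancy neighborhoods
  obtain ⟨O1, hO1, hxO1, hO1eq⟩ := hAcont (g' * g) x
  obtain ⟨O2, hO2, hgxO2, hO2eq⟩ := hAcont g' (g • x)
  obtain ⟨O3, hO3, hxO3, hO3eq⟩ := hAcont g x
  set Opre : Set X := (fun w => g • w) ⁻¹' O2 with hOpre
  have hOpreOpen : IsOpen Opre := hO2.preimage (continuous_const_smul g)
  have hxOpre : x ∈ Opre := hgxO2
  have hOopen : IsOpen (O1 ∩ Opre ∩ O3) := (hO1.inter hOpreOpen).inter hO3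
  obtain ⟨z, hzO, hzZ⟩ := hZdense (O1 ∩ Opre ∩ O3) hOopen
    ⟨x, ⟨⟨hxO1, hxOpre⟩, hxO3⟩, hxV⟩
  obtain ⟨⟨hzO1, hzOpre⟩, hzO3⟩ := hzO
  -- agreement at z
  have hzeq : A (g' * g) x • z = (A g' (g • x) * A g x) • z := by
    rw [← hO1eq z hzO1, hA, mul_smul, ← hO3eq z hzO3, mul_smul, hA,
      ← hO2eq (g • z) hzOpre, hA]
  have := hZfree (A (g' * g) x) (A g' (g • x) * A g x) hV1 hV4 z hzZ hzeq y hyV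
  rw [this, mul_smul]
end
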